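/- Let V be an N×N complex matrix and let S be an N×N complex positive semidefinite matrix with S_{ii} = 1 for all i. Then P(V,S) ≤ perm(V ∘ conj(V)) · perm(|S|), where |S| is the entrywise absolute value of S, conj(V) is the entrywise complex conjugate of V, and ∘ is the entrywise (Hadamard) product. -/

import Mathlib

open Matrix Finset
open scoped ComplexOrder

/-- The permanent of a real square matrix. -/
noncomputable def permR {N : ℕ} (M : Matrix (Fin N) (Fin N) ℝ) : ℝ :=
  ∑ τ : Equiv.Perm (Fin N), ∏ i, M i (τ i)

/-- The partially distinguishable boson-sampling transition probability. -/
noncomputable def P {N : ℕ} (V S : Matrix (Fin N) (Fin N) ℂ) : ℂ :=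
  ∑ α : Equiv.Perm (Fin N), ∑ ρ : Equiv.Perm (Fin N),
    ∏ j, V (α j) j * (starRingEnd ℂ) (V (ρ j) j) * S (ρ j) (α j)

/-!
By the triangle inequality, `|P(V,S)| ≤ Σ_{α,ρ} v_α v_ρ s_{αρ}` with `v_α = ∏ⱼ |V_{α(j),j}|` and
`s_{αρ} = ∏ⱼ |S_{ρ(j),α(j)}|`. Every row and every column of the kernel `s` sums to `perm |S|`,
so `v_α v_ρ ≤ (v_α² + v_ρ²)/2` gives `|P(V,S)| ≤ perm |S| · Σ_α v_α² = perm |S| · perm |V|²`.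
Finally `P(V,S)` is real when `S` is Hermitian, since conjugation swaps the roles of `α` and `ρ`.
-/

theorem permR_eq_permanent {N : ℕ} (M : Matrix (Fin N) (Fin N) ℝ) : permR M = M.permanent := by
  rw [← permanent_transpose]
  rfl

section Permanent

variable {n R : Type*} [DecidableEq n] [Fintype n] [CommSemiring R]

theorem Matrix.sum_prod_perm_apply_perm_apply_left (M : Matrix n n R) (α : Equiv.Perm n) :
    ∑ ρ : Equiv.Perm n, ∏ j, M (ρ j) (α j) = M.permanent :=
  permanent_permute_rows α M

theorem Matrix.sum_prod_perm_apply_perm_apply_right (M : Matrix n n R) (ρ : Equiv.Perm n) :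
    ∑ α : Equiv.Perm n, ∏ j, M (ρ j) (α j) = M.permanent := by
  rw [← permanent_transpose, ← sum_prod_perm_apply_perm_apply_left Mᵀ ρ]
  rfl

end Permanent

theorem sum_sum_mul_mul_le_of_sum_eq {ι : Type*} [Fintype ι] (a : ι → ℝ) (s : ι → ι → ℝ)
    (hs : ∀ i j, 0 ≤ s i j) (c : ℝ) (hrow : ∀ i, ∑ j, s i j = c) (hcol : ∀ j, ∑ i, s i j = c) :
    ∑ i, ∑ j, a i * a j * s i j ≤ c * ∑ i, a i ^ 2 := by
  have hrow' : ∑ i, ∑ j, a i ^ 2 * s i j = c * ∑ i, a i ^ 2 := by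
    simp_rw [← mul_sum, hrow, mul_comm _ c, ← mul_sum]
  have hcol' : ∑ i, ∑ j, a j ^ 2 * s i j = c * ∑ i, a i ^ 2 := by
    rw [sum_comm]
    simp_rw [← mul_sum, hcol, mul_comm _ c, ← mul_sum]
  calc ∑ i, ∑ j, a i * a j * s i j
      ≤ ∑ i, ∑ j, (a i ^ 2 * s i j + a j ^ 2 * s i j) / 2 := by
        gcongr with i _ j _
        nlinarith [hs i j, mul_nonneg (hs i j) (sq_nonneg (a i - a j))]
    _ = c * ∑ i, a i ^ 2 := by
        simp_rw [← sum_div, sum_add_distrib, hrow', hcol']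
        ring

theorem norm_P_le {N : ℕ} (V S : Matrix (Fin N) (Fin N) ℂ) :
    ‖P V S‖ ≤ permR (Matrix.of fun i j => ‖V i j‖ ^ 2) * permR (Matrix.of fun i j => ‖S i j‖) := by
  set v : Equiv.Perm (Fin N) → ℝ := fun α => ∏ j, ‖V (α j) j‖
  set s : Equiv.Perm (Fin N) → Equiv.Perm (Fin N) → ℝ := fun α ρ => ∏ j, ‖S (ρ j) (α j)‖
  have hv : ∑ α, v α ^ 2 = permR (Matrix.of fun i j => ‖V i j‖ ^ 2) := by
    simp_rw [permR_eq_permanent, permanent, v, ← prod_pow, of_apply]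
  calc ‖P V S‖ ≤ ∑ α, ∑ ρ, v α * v ρ * s α ρ := by
        refine (norm_sum_le _ _).trans (sum_le_sum fun α _ => (norm_sum_le _ _).trans ?_)
        simp [v, s, prod_mul_distrib]
    _ ≤ permR (Matrix.of fun i j => ‖S i j‖) * ∑ α, v α ^ 2 := by
        refine sum_sum_mul_mul_le_of_sum_eq v s (fun _ _ => by positivity) _ (fun α => ?_)
          (fun ρ => ?_) <;> rw [permR_eq_permanent]
        exacts [sum_prod_perm_apply_perm_apply_left (of fun i j => ‖S i j‖) α,
          sum_prod_perm_apply_perm_apply_right (of fun i j => ‖S i j‖) ρ]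
    _ = _ := by rw [hv, mul_comm]

theorem conj_P_of_isHermitian {N : ℕ} (V : Matrix (Fin N) (Fin N) ℂ)
    {S : Matrix (Fin N) (Fin N) ℂ} (hS : S.IsHermitian) :
    (starRingEnd ℂ) (P V S) = P V S := by
  have hconj : ∀ i j, (starRingEnd ℂ) (S i j) = S j i := fun i j => hS.apply j i
  simp_rw [P, map_sum, map_prod, map_mul, Complex.conj_conj, hconj]
  rw [sum_comm]
  refine sum_congr rfl fun α _ => sum_congr rfl fun ρ _ => prod_congr rfl fun j _ => ?_
  ring

theorem transition_prob_le_perm_mul_permAbs_general (N : ℕ)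
    (V S : Matrix (Fin N) (Fin N) ℂ)
    (hS : S.PosSemidef) :
    P V S ≤ ((permR (Matrix.of fun i j => ‖V i j‖ ^ 2) *
      permR (Matrix.of fun i j => ‖S i j‖) : ℝ) : ℂ) := by
  rw [← Complex.conj_eq_iff_re.mp (conj_P_of_isHermitian V hS.1)]
  exact_mod_cast (Complex.re_le_norm _).trans (norm_P_le V S)

/-- `P(V,S) ≤ perm(V ∘ conj V) · perm(|S|)`, where
`(V ∘ conj V) i j = |V i j|²` and `|S| i j = |S i j|`. -/
theorem transition_prob_le_perm_mul_permAbs (N : ℕ)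
    (V S : Matrix (Fin N) (Fin N) ℂ)
    (hS : S.PosSemidef) (hS1 : ∀ i, S i i = 1) :
    P V S ≤ ((permR (Matrix.of fun i j => ‖V i j‖ ^ 2) *
      permR (Matrix.of fun i j => ‖S i j‖) : ℝ) : ℂ) :=
  transition_prob_le_perm_mul_permAbs_general N V S hS
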